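/- arXiv:2001.04347 — 2 statements merged into one kernel-verified Lean document; each statement's English description precedes it below -/
import Mathlib

section
/- Let T = (S, Σ, κ) be a stochastic transition system, B ∈ Σ, and μ an initial probability distribution on (S, Σ). For every n ∈ ℕ, with p^Yes_n = Prob_μ(F^{≤n} B) and p^No_n = Prob_μ((S ∖ B) U^{≤n} B̃), we have p^Yes_n ≤ Prob_μ(F B) ≤ 1 − p^No_n. -/
/-!
Once the chain is in the avoid-set `B̃` it almost surely never visits `B` again. Indeed, by the
Markov property at time `k` the window `(X_k, …, X_{k+l})` is a chain started from the law of
`X_k`, and from a state of `B̃` such a chain hits `B` with probability zero. A run of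
`(S ∖ B) U^{≤n} B̃` reaches `B̃` before any visit to `B`, so it almost surely lies outside `F B`;
the two events are almost disjoint and their probabilities add up to at most `1`.
-/

open MeasureTheory ProbabilityTheory Filter Set ENNReal

namespace STS

variable {S : Type*} [MeasurableSpace S]

/-- The finite-dimensional distributions of the Markov chain with initial distribution `μ`
and transition kernel `κ`: `finDist κ μ n` is the joint law of the first `n+1` states. -/
noncomputable def finDist (κ : Kernel S S) (μ : Measure S) : (n : ℕ) → Measure (Fin (n + 1) → S)
  | 0 => μ.map (fun s => fun _ => s)
  | n + 1 => (finDist κ μ n).bind (fun x => (κ (x (Fin.last n))).map (Fin.snoc x))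

/-- `P` assigns to each initial probability distribution `μ` the probability measure `Prob_μ`
on the space of runs `ℕ → S` (given by the Ionescu–Tulcea theorem), i.e. the unique probability
measure under which the coordinate process is a Markov chain with initial distribution `μ` and
transition kernel `κ`.  This is characterized by the finite-dimensional distributions. -/
def IsMarkovMeasureFamily (κ : Kernel S S) (P : Measure S → Measure (ℕ → S)) : Prop :=
  ∀ μ : Measure S, IsProbabilityMeasure μ →
    IsProbabilityMeasure (P μ) ∧
    ∀ n : ℕ, (P μ).map (fun ω (i : Fin (n + 1)) => ω i.1) = finDist κ μ n

/-- `F B`: the set of runs that visit `B` at some point. -/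
def FEv (B : Set S) : Set (ℕ → S) := {ω | ∃ k, ω k ∈ B}

/-- `F^{≤n} B`: the set of runs that visit `B` within `n` steps. -/
def FLe (n : ℕ) (B : Set S) : Set (ℕ → S) := {ω | ∃ k ≤ n, ω k ∈ B}

/-- `B' U B`: runs that stay in `B'` until a first visit to `B`. -/
def Until (B' B : Set S) : Set (ℕ → S) := {ω | ∃ k, ω k ∈ B ∧ ∀ j < k, ω j ∈ B'}

/-- `B' U^{≤n} B`: runs that stay in `B'` until a first visit to `B`, within `n` steps. -/
def UntilLe (n : ℕ) (B' B : Set S) : Set (ℕ → S) :=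
  {ω | ∃ k ≤ n, ω k ∈ B ∧ ∀ j < k, ω j ∈ B'}

/-- `G B`: runs that always stay in `B`. -/
def Glob (B : Set S) : Set (ℕ → S) := {ω | ∀ k, ω k ∈ B}

/-- `GF B`: runs that visit `B` infinitely often. -/
def GlobFEv (B : Set S) : Set (ℕ → S) := {ω | ∀ n : ℕ, ∃ k ≥ n, ω k ∈ B}

/-- The avoid-set `B̃` of `B`: states from which `B` is reached with probability `0`. -/
def avoidSet (P : Measure S → Measure (ℕ → S)) (B : Set S) : Set S :=
  {s : S | P (Measure.dirac s) (FEv B) = 0}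

/-- The STS is decisive w.r.t. `B`: from any initial distribution, almost surely either `B` or
its avoid-set `B̃` is eventually visited. -/
def Decisive (P : Measure S → Measure (ℕ → S)) (B : Set S) : Prop :=
  ∀ μ : Measure S, IsProbabilityMeasure μ → P μ (FEv B ∪ FEv (avoidSet P B)) = 1

/-- `A` is an attractor: it is reached almost surely from any initial distribution. -/
def IsAttractor (P : Measure S → Measure (ℕ → S)) (A : Set S) : Prop :=
  ∀ μ : Measure S, IsProbabilityMeasure μ → P μ (FEv A) = 1

lemma measurable_snoc {α : Type*} [MeasurableSpace α] (n : ℕ) :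
    Measurable fun p : (Fin n → α) × α => (Fin.snoc p.1 p.2 : Fin (n + 1) → α) := by
  refine measurable_pi_lambda _ fun i => ?_
  induction i using Fin.lastCases with
  | last => simpa only [Fin.snoc_last] using measurable_snd
  | cast j => simp only [Fin.snoc_castSucc]; exact (measurable_pi_apply j).comp measurable_fst

lemma measurable_snoc_left {α : Type*} [MeasurableSpace α] {n : ℕ} (x : Fin n → α) :
    Measurable fun a => (Fin.snoc x a : Fin (n + 1) → α) :=
  (measurable_snoc n).comp measurable_prodMk_left

lemma measurable_kernel_map_prodMk_left {α β γ : Type*} [MeasurableSpace α] [MeasurableSpace β]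
    [MeasurableSpace γ] (η : Kernel α β) [IsSFiniteKernel η] {f : α × β → γ}
    (hf : Measurable f) : Measurable fun a => (η a).map fun b => f (a, b) := by
  refine Measure.measurable_of_measurable_coe _ fun s hs => ?_
  convert Kernel.measurable_kernel_prodMk_left (κ := η) (hf hs) using 2 with a
  exact Measure.map_apply (hf.comp measurable_prodMk_left) hs

lemma comap_comp_eq_comp_map {α β γ : Type*} [MeasurableSpace α] [MeasurableSpace β]
    [MeasurableSpace γ] (η : Kernel β γ) {f : α → β} (hf : Measurable f) (μ : Measure α) :
    η.comap f hf ∘ₘ μ = η ∘ₘ μ.map f := by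
  rw [← Kernel.comp_deterministic_eq_comap, ← Measure.comp_assoc,
    Measure.deterministic_comp_eq_map]

lemma measurableSet_exists_mem {ι α : Type*} [Countable ι] [MeasurableSpace α] {B : Set α}
    (hB : MeasurableSet B) : MeasurableSet {y : ι → α | ∃ j, y j ∈ B} := by
  simp_rw [ofPred_exists]
  exact .iUnion fun j => measurable_pi_apply j hB

def shift (k l : ℕ) (z : Fin (k + l + 1) → S) : Fin (l + 1) → S :=
  fun i => z ⟨k + i, by omega⟩

lemma measurable_shift (k l : ℕ) : Measurable (shift (S := S) k l) :=
  measurable_pi_lambda _ fun _ => measurable_pi_apply _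

omit [MeasurableSpace S] in
lemma shift_snoc (k l : ℕ) (z : Fin (k + l + 1) → S) (s : S) :
    shift k (l + 1) (Fin.snoc z s) = Fin.snoc (shift k l z) s := by
  funext i
  simp [shift, Fin.snoc]

lemma measure_preimage_eq_finDist {κ : Kernel S S} {P : Measure S → Measure (ℕ → S)}
    (hP : IsMarkovMeasureFamily κ P) (μ : Measure S)
    [IsProbabilityMeasure μ] {n : ℕ} {C : Set (Fin (n + 1) → S)} (hC : MeasurableSet C) :
    P μ ((fun ω (i : Fin (n + 1)) => ω i.1) ⁻¹' C) = finDist κ μ n C := by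
  rw [← Measure.map_apply (measurable_pi_lambda _ fun i => measurable_pi_apply _) hC,
    (hP μ ‹_›).2 n]

section Chain

variable (κ : Kernel S S) [IsMarkovKernel κ]

noncomputable def stepKernel (n : ℕ) : Kernel (Fin (n + 1) → S) (Fin (n + 2) → S) where
  toFun x := (κ (x (Fin.last n))).map (Fin.snoc x)
  measurable' := measurable_kernel_map_prodMk_left
    (κ.comap (fun x : Fin (n + 1) → S => x (Fin.last n)) (measurable_pi_apply _))
    (measurable_snoc (n + 1))

instance (n : ℕ) : IsMarkovKernel (stepKernel κ n) :=
  ⟨fun _ => Measure.isProbabilityMeasure_map (measurable_snoc_left _).aemeasurable⟩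

lemma stepKernel_apply (n : ℕ) (x : Fin (n + 1) → S) :
    stepKernel κ n x = (κ (x (Fin.last n))).map (Fin.snoc x) := rfl

noncomputable def pathKernel : (n : ℕ) → Kernel S (Fin (n + 1) → S)
  | 0 => Kernel.deterministic (fun s _ => s) (measurable_pi_lambda _ fun _ => measurable_id)
  | n + 1 => stepKernel κ n ∘ₖ pathKernel n

instance (n : ℕ) : IsMarkovKernel (pathKernel κ n) := by
  induction n with
  | zero => unfold pathKernel; infer_instance
  | succ n ih => unfold pathKernel; infer_instance

lemma finDist_succ (μ : Measure S) (n : ℕ) :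
    finDist κ μ (n + 1) = stepKernel κ n ∘ₘ finDist κ μ n := rfl

lemma finDist_eq_comp (μ : Measure S) (n : ℕ) : finDist κ μ n = pathKernel κ n ∘ₘ μ := by
  induction n with
  | zero => exact (Measure.deterministic_comp_eq_map _).symm
  | succ n ih => rw [finDist_succ, ih, Measure.comp_assoc]; rfl

lemma pathKernel_map_zero (n : ℕ) (s : S) :
    (pathKernel κ n s).map (· 0) = Measure.dirac s := by
  induction n with
  | zero => rw [pathKernel, Kernel.deterministic_apply, Measure.map_dirac' (measurable_pi_apply 0)]
  | succ n ih =>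
    have hstep :
        (stepKernel κ n).map (· 0) = Kernel.deterministic (· 0) (measurable_pi_apply 0) := by
      ext1 x
      have hfirst : (fun y : Fin (n + 2) → S => y 0) ∘ Fin.snoc x = fun _ => x 0 := by
        funext s
        exact Fin.snoc_castSucc (α := fun _ => S) (i := 0) s x
      rw [Kernel.map_apply _ (measurable_pi_apply 0), Kernel.deterministic_apply, stepKernel_apply,
        Measure.map_map (measurable_pi_apply 0) (measurable_snoc_left x),
        hfirst, Measure.map_const, measure_univ, one_smul]
    rw [pathKernel, Kernel.comp_apply, Measure.map_comp _ _ (measurable_pi_apply 0), hstep,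
      Measure.deterministic_comp_eq_map, ih]

lemma stepKernel_map_shift (k l : ℕ) :
    (stepKernel κ (k + l)).map (shift k (l + 1)) =
      (stepKernel κ l).comap (shift k l) (measurable_shift k l) := by
  ext1 z
  have hlast : shift k l z (Fin.last l) = z (Fin.last (k + l)) := congrArg z (Fin.ext (by simp))
  rw [Kernel.map_apply (stepKernel κ (k + l)) (measurable_shift k (l + 1)), Kernel.comap_apply,
    stepKernel_apply, stepKernel_apply,
    Measure.map_map (measurable_shift k (l + 1)) (measurable_snoc_left z), hlast]
  congr 1
  funext s
  exact shift_snoc k l z s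

/-- The Markov property at time `k`: the window `(X_k, …, X_{k+l})` is a chain of length `l`
started from the law of `X_k`. -/
lemma finDist_map_shift (μ : Measure S) (k l : ℕ) :
    (finDist κ μ (k + l)).map (shift k l) =
      finDist κ ((finDist κ μ k).map (· (Fin.last k))) l := by
  induction l with
  | zero =>
    have hconst : shift k 0 = (fun s _ => s) ∘ fun z : Fin (k + 1) → S => z (Fin.last k) := by
      funext z i
      exact congrArg z (Fin.ext (by simp [Fin.fin_one_eq_zero i]))
    rw [hconst, ← Measure.map_map (show Measurable fun (s : S) (_ : Fin 1) => s from
      measurable_pi_lambda _ fun _ => measurable_id) (measurable_pi_apply _)]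
    rfl
  | succ l ih =>
    change (stepKernel κ (k + l) ∘ₘ finDist κ μ (k + l)).map (shift k (l + 1)) = _
    rw [Measure.map_comp _ _ (measurable_shift _ _), stepKernel_map_shift,
      comap_comp_eq_comp_map, ih]
    rfl

/-- A finite-horizon analogue of `avoidSet` which, unlike `avoidSet`, is measurable by
construction. -/
def nullStarts (l : ℕ) (C : Set (Fin (l + 1) → S)) : Set S := {s | pathKernel κ l s C = 0}

variable {κ}

lemma measurableSet_nullStarts {l : ℕ} {C : Set (Fin (l + 1) → S)} (hC : MeasurableSet C) :
    MeasurableSet (nullStarts κ l C) :=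
  Kernel.measurable_coe _ hC (measurableSet_singleton 0)

lemma finDist_nullStarts_inter_eq_zero (ν : Measure S) {l : ℕ} {C : Set (Fin (l + 1) → S)}
    (hC : MeasurableSet C) : finDist κ ν l ((· 0) ⁻¹' nullStarts κ l C ∩ C) = 0 := by
  have hN := measurableSet_nullStarts (κ := κ) hC
  have hstart : ∀ s, pathKernel κ l s ((· 0) ⁻¹' nullStarts κ l C ∩ C) = 0 := by
    intro s
    by_cases hs : s ∈ nullStarts κ l C
    · exact measure_mono_null inter_subset_right hs
    · refine measure_mono_null inter_subset_left ?_
      rw [← Measure.map_apply (measurable_pi_apply 0) hN, pathKernel_map_zero,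
        Measure.dirac_apply' _ hN, indicator_of_notMem hs]
  rw [finDist_eq_comp, Measure.bind_apply ((measurable_pi_apply 0 hN).inter hC)
    (Kernel.aemeasurable _)]
  simp [hstart]

variable {P : Measure S → Measure (ℕ → S)}

lemma measure_mem_nullStarts_and_mem_eq_zero (hP : IsMarkovMeasureFamily κ P) (μ : Measure S)
    [IsProbabilityMeasure μ] (k : ℕ) {l : ℕ} {C : Set (Fin (l + 1) → S)}
    (hC : MeasurableSet C) :
    P μ {ω | ω k ∈ nullStarts κ l C ∧ (fun i : Fin (l + 1) => ω (k + i)) ∈ C} = 0 := by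
  have hD := (measurable_pi_apply 0 (measurableSet_nullStarts (κ := κ) hC)).inter hC
  have h := measure_preimage_eq_finDist hP μ (n := k + l) (measurable_shift k l hD)
  rw [← Measure.map_apply (measurable_shift k l) hD, finDist_map_shift,
    finDist_nullStarts_inter_eq_zero _ hC] at h
  exact h

lemma avoidSet_subset_nullStarts (hP : IsMarkovMeasureFamily κ P) {B : Set S}
    (hB : MeasurableSet B) (l : ℕ) : avoidSet P B ⊆ nullStarts κ l {y | ∃ j, y j ∈ B} := by
  intro s hs
  change pathKernel κ l s _ = 0
  rw [← Measure.dirac_bind (Kernel.measurable _) s, ← finDist_eq_comp,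
    ← measure_preimage_eq_finDist hP _ (measurableSet_exists_mem hB)]
  refine measure_mono_null ?_ hs
  rintro ω ⟨j, hj⟩
  exact ⟨j, hj⟩

end Chain

/-- For every `n`, `p^Yes_n ≤ Prob_μ(F B) ≤ 1 − p^No_n`. -/
theorem pYes_le_prob_le_one_sub_pNo
    (κ : Kernel S S) [IsMarkovKernel κ]
    (P : Measure S → Measure (ℕ → S)) (hP : IsMarkovMeasureFamily κ P)
    (B : Set S) (hB : MeasurableSet B)
    (μ : Measure S) (hμ : IsProbabilityMeasure μ) (n : ℕ) :
    P μ (FLe n B) ≤ P μ (FEv B) ∧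
      P μ (FEv B) ≤ 1 - P μ (UntilLe n Bᶜ (avoidSet P B)) := by
  refine ⟨measure_mono fun ω ⟨k, _, hk⟩ => ⟨k, hk⟩, ?_⟩
  have hnull : P μ (FEv B ∩ UntilLe n Bᶜ (avoidSet P B)) = 0 := by
    refine measure_mono_null ?_ (measure_iUnion_null fun k => measure_iUnion_null fun l =>
      measure_mem_nullStarts_and_mem_eq_zero hP μ k (l := l) (measurableSet_exists_mem hB))
    rintro ω ⟨⟨j, hj⟩, k, -, hk, hbefore⟩
    have hkj : k ≤ j := not_lt.1 fun h => hbefore j h hj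
    refine mem_iUnion₂.2 ⟨k, j - k, avoidSet_subset_nullStarts hP hB (j - k) hk,
      ⟨j - k, by omega⟩, ?_⟩
    simpa [Nat.add_sub_cancel' hkj] using hj
  have hsum := measure_union_add_inter' (μ := P μ)
    (show MeasurableSet (FEv B) from measurableSet_exists_mem hB) (UntilLe n Bᶜ (avoidSet P B))
  rw [hnull, add_zero] at hsum
  have : IsProbabilityMeasure (P μ) := (hP μ hμ).1
  exact ENNReal.le_sub_of_add_le_right (measure_ne_top _ _) (hsum ▸ prob_le_one)


end STS
end

section
/- Let T = (S, Σ, κ) be a stochastic transition system, μ an initial probability distribution on (S, Σ), and B ∈ Σ. Let (F_n)_{n∈ℕ} be the filtration on the run space S^ℕ where F_n is the σ-algebra generated by the first n+1 coordinate maps. Then for Prob_μ-almost every run ω: ω never visits B (i.e., ω ∈ G(S ∖ B)) if and only if the conditional expectation E[1_{F B} | F_n](ω) converges to 0 as n → ∞. -/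
open MeasureTheory ProbabilityTheory Filter Set ENNReal

namespace STS

variable {S : Type*} [MeasurableSpace S]

/-! By Lévy's upward theorem, `E[1_{F B} | F_n] → 1_{F B}` almost surely, since `F B` is
measurable for the product σ-algebra, which is generated by the `F_n`. The limit `1_{F B}(ω)`
vanishes exactly when `ω` never visits `B`. -/

theorem _root_.MeasureTheory.Filtration.iSup_piLE {ι : Type*} [Preorder ι] {X : ι → Type*}
    [∀ i, MeasurableSpace (X i)] : ⨆ i, Filtration.piLE (X := X) i = MeasurableSpace.pi := by
  refine le_antisymm (iSup_le Filtration.piLE.le) (iSup_le fun i => le_iSup_of_le i ?_)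
  have : Measurable[Filtration.piLE i] fun ω : (∀ j, X j) => ω i :=
    (measurable_pi_apply (X := fun j : Iic i => X j) ⟨i, le_rfl⟩).comp
      (comap_measurable (Preorder.restrictLe i))
  exact this.comap_le

theorem comap_restrictFin_eq_piLE (n : ℕ) :
    MeasurableSpace.comap (fun (ω : ℕ → S) (i : Fin (n + 1)) => ω i.1) inferInstance =
      Filtration.piLE (X := fun _ => S) n := by
  have hFin : Measurable[Filtration.piLE n] fun (ω : ℕ → S) (i : Fin (n + 1)) => ω i.1 := by
    have hg := measurable_pi_lambda (fun (x : Iic n → S) (i : Fin (n + 1)) => x ⟨i, by grind⟩)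
      fun _ => measurable_pi_apply _
    exact hg.comp (comap_measurable (Preorder.restrictLe (π := fun _ => S) n))
  have hIic : Measurable[MeasurableSpace.comap (fun (ω : ℕ → S) (i : Fin (n + 1)) => ω i.1)
      inferInstance] (Preorder.restrictLe n) := by
    have hg := measurable_pi_lambda (fun (x : Fin (n + 1) → S) (j : Iic n) => x ⟨j, by grind⟩)
      fun _ => measurable_pi_apply _
    exact hg.comp (comap_measurable _)
  exact le_antisymm hFin.comap_le hIic.comap_le

theorem measurableSet_FEv {B : Set S} (hB : MeasurableSet B) : MeasurableSet (FEv B) := by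
  simp only [FEv, ofPred_exists]
  exact .iUnion fun k => measurable_pi_apply k hB

theorem mem_Glob_compl_iff {α : Type*} {B : Set α} {ω : ℕ → α} : ω ∈ Glob Bᶜ ↔ ω ∉ FEv B := by
  simp [Glob, FEv]

theorem _root_.MeasureTheory.ae_tendsto_condExp_indicator {Ω : Type*} {m₀ : MeasurableSpace Ω}
    {μ : Measure Ω} [IsFiniteMeasure μ] (ℱ : Filtration ℕ m₀) {A : Set Ω}
    (hA : MeasurableSet[⨆ n, ℱ n] A) :
    ∀ᵐ ω ∂μ, Tendsto (fun n => (μ[A.indicator (fun _ => (1 : ℝ)) | ℱ n]) ω) atTop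
      (nhds (A.indicator (fun _ => 1) ω)) :=
  ((integrable_const 1).indicator (iSup_le ℱ.le _ hA)).tendsto_ae_condExp
    (stronglyMeasurable_const.indicator hA)

theorem _root_.notMem_iff_tendsto_zero_of_tendsto_indicator {ι α M : Type*} [TopologicalSpace M]
    [T2Space M] [Zero M] [One M] [NeZero (1 : M)] {l : Filter ι} [l.NeBot] {A : Set α} {x : α}
    {f : ι → M} (hf : Tendsto f l (nhds (A.indicator (fun _ => 1) x))) :
    x ∉ A ↔ Tendsto f l (nhds 0) := by
  by_cases hx : x ∈ A
  · rw [indicator_of_mem hx] at hf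
    exact iff_of_false (not_not.2 hx) fun h0 => one_ne_zero (tendsto_nhds_unique hf h0)
  · simpa [hx] using hf

theorem never_visits_iff_condexp_tendsto_zero_general
    (κ : Kernel S S)
    (P : Measure S → Measure (ℕ → S)) (hP : IsMarkovMeasureFamily κ P)
    (B : Set S) (hB : MeasurableSet B)
    (μ : Measure S) (hμ : IsProbabilityMeasure μ)
    (F : ℕ → MeasurableSpace (ℕ → S))
    (hF : ∀ n : ℕ, F n =
      MeasurableSpace.comap (fun ω (i : Fin (n + 1)) => ω i.1) inferInstance) :
    ∀ᵐ ω ∂(P μ),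
      (ω ∈ Glob Bᶜ ↔
        Tendsto (fun n => ((P μ)[(FEv B).indicator (fun _ => (1 : ℝ)) | F n]) ω)
          atTop (nhds 0)) := by
  obtain ⟨hPμ, -⟩ := hP μ hμ
  obtain rfl : F = fun n => Filtration.piLE n :=
    funext fun n => (hF n).trans (comap_restrictFin_eq_piLE n)
  have hFEv : MeasurableSet[⨆ n, Filtration.piLE n] (FEv B) := by
    rw [Filtration.iSup_piLE]
    exact measurableSet_FEv hB
  filter_upwards [ae_tendsto_condExp_indicator Filtration.piLE hFEv] with ω hω
  rw [mem_Glob_compl_iff]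
  exact notMem_iff_tendsto_zero_of_tendsto_indicator hω

/-- Lévy's zero-one law for the run space. For `Prob_μ`-almost every run
`ω`: `ω` never visits `B` iff the conditional expectation of the indicator of `F B` given the
first `n+1` coordinates, evaluated at `ω`, converges to `0`. -/
theorem never_visits_iff_condexp_tendsto_zero
    (κ : Kernel S S) [IsMarkovKernel κ]
    (P : Measure S → Measure (ℕ → S)) (hP : IsMarkovMeasureFamily κ P)
    (B : Set S) (hB : MeasurableSet B)
    (μ : Measure S) (hμ : IsProbabilityMeasure μ)
    (F : ℕ → MeasurableSpace (ℕ → S))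
    (hF : ∀ n : ℕ, F n =
      MeasurableSpace.comap (fun ω (i : Fin (n + 1)) => ω i.1) inferInstance) :
    ∀ᵐ ω ∂(P μ),
      (ω ∈ Glob Bᶜ ↔
        Tendsto (fun n => ((P μ)[(FEv B).indicator (fun _ => (1 : ℝ)) | F n]) ω)
          atTop (nhds 0)) :=
  never_visits_iff_condexp_tendsto_zero_general κ P hP B hB μ hμ F hF

end STS
end
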